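/- arXiv:math/0607625 — 4 statements merged into one kernel-verified Lean document; each statement's English description precedes it below -/
import Mathlib

section
/- (Scalar case p = 1, k = 2 of the normalizing constant.) For positive reals α₁, α₂, α₃, β₁, β₂ the double integral ∫₀^∞ ∫₀^∞ x₁^{α₁−1} x₂^{α₂−1} (1+x₂)^{β₁} (1+x₁+x₂)^{−(α₁+α₂+α₃+β₁+β₂)} dx₁ dx₂ equals [Γ(α₁)Γ(α₂+α₃+β₁+β₂)/Γ(α₁+α₂+α₃+β₁+β₂)] · [Γ(α₂)Γ(α₃+β₂)/Γ(α₂+α₃+β₂)]. -/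
/-!
Integrating out `x₁` first, the substitution `x₁ = (1 + x₂) u` turns the inner integral into
`(1 + x₂) ^ (-(α₂ + α₃ + β₁ + β₂))` times the type-2 beta integral `B(α₁, α₂ + α₃ + β₁ + β₂)`.
The factor `(1 + x₂) ^ β₁` cancels against part of this power, and what remains in `x₂` is the
type-2 beta integral `B(α₂, α₃ + β₂)`. The type-2 beta integral
`∫₀^∞ x ^ (a - 1) (1 + x) ^ (-(a + b)) dx` is reduced to Euler's beta integral by `x = t / (1 - t)`.
-/

open MeasureTheory Real Set
open ProbabilityTheory (beta)

theorem integral_Ioo_rpow_mul_one_sub_rpow_eq_beta {a b : ℝ} (ha : 0 < a) (hb : 0 < b) :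
    ∫ t in Ioo (0 : ℝ) 1, t ^ (a - 1) * (1 - t) ^ (b - 1) = beta a b := by
  have hreal : Complex.betaIntegral a b =
      ↑(∫ t in (0 : ℝ)..1, t ^ (a - 1) * (1 - t) ^ (b - 1)) := by
    rw [← intervalIntegral.integral_ofReal]
    refine intervalIntegral.integral_congr fun t ht => ?_
    rw [uIcc_of_le zero_le_one] at ht
    push_cast [Complex.ofReal_cpow ht.1, Complex.ofReal_cpow (sub_nonneg.2 ht.2)]
    rfl
  rw [ProbabilityTheory.beta_eq_betaIntegralReal a b ha hb, hreal, Complex.ofReal_re,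
    intervalIntegral.integral_of_le zero_le_one, integral_Ioc_eq_integral_Ioo]

theorem image_div_one_sub_Ioo : (fun t : ℝ => t / (1 - t)) '' Ioo 0 1 = Ioi 0 := by
  refine Subset.antisymm ?_ fun x (hx : 0 < x) => ⟨x / (1 + x), ⟨by positivity, ?_⟩, ?_⟩
  · rintro _ ⟨t, ⟨ht₀, ht₁⟩, rfl⟩
    exact div_pos ht₀ (sub_pos.2 ht₁)
  · rw [div_lt_one (by positivity)]
    linarith
  · have : (1 : ℝ) + x ≠ 0 := by positivity
    field_simp
    ring

theorem injOn_div_one_sub : InjOn (fun t : ℝ => t / (1 - t)) (Ioo 0 1) := by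
  intro s hs t ht hst
  have : 1 - s ≠ 0 := (sub_pos.2 hs.2).ne'
  have : 1 - t ≠ 0 := (sub_pos.2 ht.2).ne'
  field_simp at hst
  linarith

theorem hasDerivAt_div_one_sub {t : ℝ} (ht : t ≠ 1) :
    HasDerivAt (fun t : ℝ => t / (1 - t)) ((1 - t) ^ 2)⁻¹ t :=
  ((hasDerivAt_id' t).div ((hasDerivAt_id' t).const_sub 1) (sub_ne_zero.2 ht.symm)).congr_deriv
    (by ring)

theorem integral_Ioi_rpow_mul_one_add_rpow_eq_beta {a b : ℝ} (ha : 0 < a) (hb : 0 < b) :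
    ∫ x in Ioi (0 : ℝ), x ^ (a - 1) * (1 + x) ^ (-(a + b)) = beta a b := by
  rw [← image_div_one_sub_Ioo, integral_image_eq_integral_abs_deriv_smul measurableSet_Ioo
      (fun t ht => (hasDerivAt_div_one_sub ht.2.ne).hasDerivWithinAt) injOn_div_one_sub,
    ← integral_Ioo_rpow_mul_one_sub_rpow_eq_beta ha hb]
  refine setIntegral_congr_fun measurableSet_Ioo fun t ⟨ht₀, ht₁⟩ => ?_
  have hs : 0 < 1 - t := sub_pos.2 ht₁
  have hinv : 1 + t / (1 - t) = (1 - t)⁻¹ := by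
    field_simp
    ring
  have hsplit : (1 - t) ^ (a + b) = (1 - t) ^ (a - 1) * (1 - t) ^ (b - 1) * (1 - t) ^ 2 := by
    rw [← rpow_two, ← rpow_add hs, ← rpow_add hs]
    ring_nf
  rw [smul_eq_mul, abs_of_pos (by positivity), hinv, div_rpow ht₀.le hs.le, inv_rpow hs.le,
    rpow_neg hs.le, inv_inv, hsplit]
  field_simp

theorem integral_Ioi_rpow_mul_add_rpow_eq_rpow_mul_beta {a b c : ℝ} (ha : 0 < a) (hb : 0 < b)
    (hc : 0 < c) :
    ∫ x in Ioi (0 : ℝ), x ^ (a - 1) * (c + x) ^ (-(a + b)) = c ^ (-b) * beta a b := by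
  have hscale := integral_comp_mul_left_Ioi' (fun x => x ^ (a - 1) * (c + x) ^ (-(a + b))) 0 hc
  have hfactor : ∀ x ∈ Ioi (0 : ℝ), (c * x) ^ (a - 1) * (c + c * x) ^ (-(a + b)) =
      c ^ (a - 1) * c ^ (-(a + b)) * (x ^ (a - 1) * (1 + x) ^ (-(a + b))) := fun x hx => by
    rw [mul_rpow hc.le (le_of_lt hx), ← mul_one_add, mul_rpow hc.le (by linarith [hx.out])]
    ring
  have hexp : c * (c ^ (a - 1) * c ^ (-(a + b))) = c ^ (-b) := by
    rw [← rpow_add hc, ← rpow_one_add' hc.le (by linarith)]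
    ring_nf
  rw [mul_zero] at hscale
  rw [← hscale, smul_eq_mul, setIntegral_congr_fun measurableSet_Ioi hfactor, integral_const_mul,
    integral_Ioi_rpow_mul_one_add_rpow_eq_beta ha hb, ← mul_assoc, hexp]

theorem integral_Ioi_dirichlet_type2_integrand_fst {a b p q y : ℝ} (ha : 0 < a) (hb : 0 < b)
    (hy : 0 < 1 + y) :
    ∫ x in Ioi (0 : ℝ), x ^ (a - 1) * y ^ p * (1 + y) ^ q * (1 + x + y) ^ (-(a + b)) =
      beta a b * (y ^ p * (1 + y) ^ (q - b)) := by
  calc _ = ∫ x in Ioi (0 : ℝ),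
          y ^ p * (1 + y) ^ q * (x ^ (a - 1) * ((1 + y) + x) ^ (-(a + b))) := by
        congr 1 with x
        ring_nf
    _ = y ^ p * (1 + y) ^ q * ((1 + y) ^ (-b) * beta a b) := by
        rw [integral_const_mul, integral_Ioi_rpow_mul_add_rpow_eq_rpow_mul_beta ha hb hy]
    _ = _ := by
        rw [sub_eq_add_neg, rpow_add hy]
        ring

/-- Scalar (p = 1, k = 2) case of the normalizing constant of the extended
type-2 Dirichlet density. -/
theorem dirichlet_type2_integral_k2 {α₁ α₂ α₃ β₁ β₂ : ℝ}
    (h₁ : 0 < α₁) (h₂ : 0 < α₂) (h₃ : 0 < α₃) (h₄ : 0 < β₁) (h₅ : 0 < β₂) :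
    ∫ x₂ in Set.Ioi (0 : ℝ), ∫ x₁ in Set.Ioi (0 : ℝ),
        x₁ ^ (α₁ - 1) * x₂ ^ (α₂ - 1) * (1 + x₂) ^ β₁ *
          (1 + x₁ + x₂) ^ (-(α₁ + α₂ + α₃ + β₁ + β₂)) =
      (Gamma α₁ * Gamma (α₂ + α₃ + β₁ + β₂) / Gamma (α₁ + α₂ + α₃ + β₁ + β₂)) *
        (Gamma α₂ * Gamma (α₃ + β₂) / Gamma (α₂ + α₃ + β₂)) := by
  have hinner : ∀ x₂ ∈ Ioi (0 : ℝ), ∫ x₁ in Ioi (0 : ℝ),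
        x₁ ^ (α₁ - 1) * x₂ ^ (α₂ - 1) * (1 + x₂) ^ β₁ *
          (1 + x₁ + x₂) ^ (-(α₁ + (α₂ + α₃ + β₁ + β₂))) =
      beta α₁ (α₂ + α₃ + β₁ + β₂) * (x₂ ^ (α₂ - 1) * (1 + x₂) ^ (-(α₂ + (α₃ + β₂)))) :=
    fun x₂ hx₂ => by
      rw [integral_Ioi_dirichlet_type2_integrand_fst h₁ (by positivity) (by linarith [hx₂.out])]
      ring_nf
  simp_rw [show α₁ + α₂ + α₃ + β₁ + β₂ = α₁ + (α₂ + α₃ + β₁ + β₂) by ring]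
  rw [setIntegral_congr_fun measurableSet_Ioi hinner, integral_const_mul,
    integral_Ioi_rpow_mul_one_add_rpow_eq_beta h₂ (by positivity), beta, beta]
  ring_nf
end

section
/- (Scalar case p = 1 of Theorem 2.1, k = 2.) Let (X₁, X₂) be random variables on (0,∞)² with joint density proportional to x₁^{α₁−1} x₂^{α₂−1} (1+x₂)^{β₁} (1+x₁+x₂)^{−(α₁+α₂+α₃+β₁+β₂)}. Then Y₁ = X₁/(1+X₁+X₂) and Y₂ = X₂/(1+X₂) are independent, Y₁ ~ Beta(α₁, α₂+α₃+β₁+β₂) and Y₂ ~ Beta(α₂, α₃+β₂). -/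
open MeasureTheory Real Set

/-- The Beta(a,b) distribution on (0,1). -/
noncomputable def betaMeasure (a b : ℝ) : Measure ℝ :=
  volume.withDensity fun y => ENNReal.ofReal
    ((Ioo (0 : ℝ) 1).indicator
      (fun y => y ^ (a - 1) * (1 - y) ^ (b - 1) / (Gamma a * Gamma b / Gamma (a + b))) y)

/-!
Integrate out `x₁` first. For fixed `x₂ > 0` and `k = 1 + x₂`, the substitution
`x₁ = k y / (1 - y)` (inverse `y = x₁ / (k + x₁)`) turns `x₁ ^ (a - 1) * (k + x₁) ^ (-(a + b))`
into `k ^ (-b) * y ^ (a - 1) * (1 - y) ^ (b - 1)`. With `a = α₁` and `b = α₂ + α₃ + β₁ + β₂`,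
the fibre over `x₂` thus contributes a Beta(`α₁`, `b`) integral over `s` times `(1 + x₂) ^ (-b)`;
together with `(1 + x₂) ^ β₁` this leaves `x₂ ^ (α₂ - 1) * (1 + x₂) ^ (-(α₂ + α₃ + β₂))`, which the
same substitution with `k = 1` turns into a Beta(`α₂`, `α₃ + β₂`) integral over `t`. So the law of
`(Y₁, Y₂)` factorises on rectangles, and total mass one fixes `c`.
-/
lemma div_sq_mul_rpow_mul_rpow {k u y : ℝ} (hk : 0 < k) (hu : 0 < u) (hy : 0 < y) (a b : ℝ) :
    k / u ^ 2 * ((k * y / u) ^ (a - 1) * (k / u) ^ (-(a + b))) =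
      k ^ (-b) * (y ^ (a - 1) * u ^ (b - 1)) := by
  have hk_exp : k ^ (-b) = k * k ^ (a - 1) * k ^ (-(a + b)) := by
    rw [show -b = 1 + (a - 1) + -(a + b) by ring, rpow_add hk, rpow_add hk, rpow_one]
  have hu_exp : u ^ (b - 1) = (u ^ 2 * u ^ (a - 1) * u ^ (-(a + b)))⁻¹ := by
    rw [show b - 1 = -(2 + (a - 1) + -(a + b)) by ring, rpow_neg hu.le, rpow_add hu, rpow_add hu,
      rpow_two]
  rw [div_rpow (by positivity) hu.le, mul_rpow hk.le hy.le, div_rpow hk.le hu.le, hk_exp, hu_exp]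
  field_simp

lemma setLIntegral_rpow_mul_add_rpow_preimage_div_add {a b k : ℝ} (hk : 0 < k) {s : Set ℝ}
    (hs : MeasurableSet s) :
    ∫⁻ x in Ioi 0 ∩ (fun x => x / (k + x)) ⁻¹' s,
        ENNReal.ofReal (x ^ (a - 1) * (k + x) ^ (-(a + b))) =
      ENNReal.ofReal (k ^ (-b)) *
        ∫⁻ y in Ioo 0 1 ∩ s, ENNReal.ofReal (y ^ (a - 1) * (1 - y) ^ (b - 1)) := by
  set φ : ℝ → ℝ := fun y => k * y / (1 - y)
  have hφ : ∀ y, y < 1 → k + φ y = k / (1 - y) := fun y hy => by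
    simp only [φ]; field_simp [(sub_pos.2 hy).ne']; ring
  have hinv : InvOn (fun x => x / (k + x)) φ (Ioo 0 1) (Ioi 0) := by
    refine ⟨fun y ⟨_, hy₁⟩ => ?_, fun x (hx : 0 < x) => ?_⟩
    · simp only [hφ y hy₁, φ]; field_simp [(sub_pos.2 hy₁).ne']
    · simp only [φ]; field_simp [hk.ne']; ring
  have hmaps : MapsTo φ (Ioo 0 1) (Ioi 0) := fun y ⟨hy₀, hy₁⟩ =>
    div_pos (mul_pos hk hy₀) (sub_pos.2 hy₁)
  have hmaps' : MapsTo (fun x => x / (k + x)) (Ioi 0) (Ioo 0 1) := fun x (hx : 0 < x) =>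
    ⟨by positivity, (div_lt_one (by positivity)).2 (by linarith)⟩
  have himage : φ '' (Ioo 0 1 ∩ s) = Ioi 0 ∩ (fun x => x / (k + x)) ⁻¹' s := by
    rw [inter_comm, hinv.1.image_inter', (hinv.bijOn hmaps hmaps').image_eq, inter_comm]
  have hderiv : ∀ y ∈ Ioo 0 1 ∩ s, HasDerivWithinAt φ (k / (1 - y) ^ 2) (Ioo 0 1 ∩ s) y := by
    rintro y ⟨⟨_, hy₁⟩, _⟩
    refine (((hasDerivAt_id' y).const_mul k).div ((hasDerivAt_id' y).const_sub 1)
      (sub_pos.2 hy₁).ne').hasDerivWithinAt.congr_deriv ?_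
    ring
  rw [← himage, lintegral_image_eq_lintegral_abs_deriv_mul (measurableSet_Ioo.inter hs) hderiv
    (hinv.1.injOn.mono inter_subset_left), ← lintegral_const_mul' _ _ ENNReal.ofReal_ne_top]
  refine setLIntegral_congr_fun (measurableSet_Ioo.inter hs) fun y ⟨⟨hy₀, hy₁⟩, _⟩ => ?_
  have hu : 0 < 1 - y := sub_pos.2 hy₁
  rw [hφ y hy₁, abs_of_pos (by positivity), ← ENNReal.ofReal_mul (by positivity),
    ← ENNReal.ofReal_mul (by positivity), div_sq_mul_rpow_mul_rpow hk hu hy₀]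

lemma setLIntegral_prod_symm_of_mem_iff {α β : Type*} [MeasurableSpace α] [MeasurableSpace β]
    {μ : Measure α} {ν : Measure β} [SFinite μ] [SFinite ν] {f : α × β → ENNReal}
    (hf : Measurable f) {E : Set (α × β)} (hE : MeasurableSet E) {B : Set β} {A : β → Set α}
    (hB : MeasurableSet B) (hA : ∀ y, MeasurableSet (A y))
    (hmem : ∀ x y, (x, y) ∈ E ↔ y ∈ B ∧ x ∈ A y) :
    ∫⁻ z in E, f z ∂μ.prod ν = ∫⁻ y in B, ∫⁻ x in A y, f (x, y) ∂μ ∂ν := by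
  rw [← lintegral_indicator hE, lintegral_prod_symm' _ (hf.indicator hE),
    ← lintegral_indicator hB]
  refine lintegral_congr fun y => ?_
  by_cases hy : y ∈ B
  · rw [indicator_of_mem hy, ← lintegral_indicator (hA y)]
    refine lintegral_congr fun x => ?_
    by_cases hx : x ∈ A y <;> simp [hmem, hx, hy]
  · simp [hmem, hy]

lemma betaMeasure_eq_probabilityTheory_betaMeasure (a b : ℝ) :
    betaMeasure a b = ProbabilityTheory.betaMeasure a b := by
  refine congrArg volume.withDensity (funext fun y => ?_)
  simp only [ProbabilityTheory.betaPDF, ProbabilityTheory.betaPDFReal, ProbabilityTheory.beta,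
    indicator, mem_Ioo]
  split_ifs <;> ring_nf

lemma betaMeasure_apply (a b : ℝ) {s : Set ℝ} (hs : MeasurableSet s) :
    betaMeasure a b s = ENNReal.ofReal (ProbabilityTheory.beta a b)⁻¹ *
      ∫⁻ y in Ioo 0 1 ∩ s, ENNReal.ofReal (y ^ (a - 1) * (1 - y) ^ (b - 1)) := by
  rw [betaMeasure, withDensity_apply _ hs, ← Function.comp_def ENNReal.ofReal,
    ← indicator_comp_of_zero ENNReal.ofReal_zero, lintegral_indicator measurableSet_Ioo,
    Measure.restrict_restrict measurableSet_Ioo, ← lintegral_const_mul' _ _ ENNReal.ofReal_ne_top]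
  refine setLIntegral_congr_fun (measurableSet_Ioo.inter hs) fun y ⟨⟨hy₀, hy₁⟩, _⟩ => ?_
  rw [Function.comp_apply, div_eq_mul_inv, mul_comm, ENNReal.ofReal_mul' (by positivity)]
  rfl

lemma setLIntegral_Ioo_rpow_mul_one_sub_rpow {a b : ℝ} (ha : 0 < a) (hb : 0 < b) :
    ∫⁻ y in Ioo 0 1, ENNReal.ofReal (y ^ (a - 1) * (1 - y) ^ (b - 1)) =
      ENNReal.ofReal (ProbabilityTheory.beta a b) := by
  have h := (ProbabilityTheory.isProbabilityMeasureBeta ha hb).measure_univ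
  rw [← betaMeasure_eq_probabilityTheory_betaMeasure, betaMeasure_apply a b MeasurableSet.univ,
    inter_univ, ENNReal.ofReal_inv_of_pos (ProbabilityTheory.beta_pos ha hb)] at h
  exact (inv_inj.mp (ENNReal.eq_inv_of_mul_eq_one_left h)).symm

lemma isProbabilityMeasure_betaMeasure {a b : ℝ} (ha : 0 < a) (hb : 0 < b) :
    IsProbabilityMeasure (betaMeasure a b) :=
  betaMeasure_eq_probabilityTheory_betaMeasure a b ▸
    ProbabilityTheory.isProbabilityMeasureBeta ha hb

noncomputable def type2DirichletDensity (α₁ α₂ α₃ β₁ β₂ c : ℝ) (x : ℝ × ℝ) : ℝ :=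
  c * x.1 ^ (α₁ - 1) * x.2 ^ (α₂ - 1) * (1 + x.2) ^ β₁ *
    (1 + x.1 + x.2) ^ (-(α₁ + α₂ + α₃ + β₁ + β₂))

lemma setLIntegral_type2DirichletDensity_fiber {α₁ α₂ α₃ β₁ β₂ c x₂ : ℝ} (hc : 0 ≤ c)
    (hx₂ : 0 < x₂) {s : Set ℝ} (hs : MeasurableSet s) :
    ∫⁻ x₁ in Ioi 0 ∩ (fun x₁ => x₁ / ((1 + x₂) + x₁)) ⁻¹' s,
        ENNReal.ofReal (type2DirichletDensity α₁ α₂ α₃ β₁ β₂ c (x₁, x₂)) =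
      ENNReal.ofReal c *
        (∫⁻ y in Ioo 0 1 ∩ s, ENNReal.ofReal (y ^ (α₁ - 1) * (1 - y) ^ (α₂ + α₃ + β₁ + β₂ - 1))) *
        ENNReal.ofReal (x₂ ^ (α₂ - 1) * (1 + x₂) ^ (-(α₂ + (α₃ + β₂)))) := by
  have hk : 0 < 1 + x₂ := by linarith
  have hsplit : ∀ x₁, type2DirichletDensity α₁ α₂ α₃ β₁ β₂ c (x₁, x₂) =
      c * x₂ ^ (α₂ - 1) * (1 + x₂) ^ β₁ *
        (x₁ ^ (α₁ - 1) * ((1 + x₂) + x₁) ^ (-(α₁ + (α₂ + α₃ + β₁ + β₂)))) := fun x₁ => by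
    simp only [type2DirichletDensity]; ring_nf
  have hconst : c * x₂ ^ (α₂ - 1) * (1 + x₂) ^ β₁ * (1 + x₂) ^ (-(α₂ + α₃ + β₁ + β₂)) =
      c * (x₂ ^ (α₂ - 1) * (1 + x₂) ^ (-(α₂ + (α₃ + β₂)))) := by
    rw [mul_assoc _ ((1 + x₂) ^ β₁), ← rpow_add hk]; ring_nf
  simp_rw [hsplit, ENNReal.ofReal_mul (by positivity : 0 ≤ c * x₂ ^ (α₂ - 1) * (1 + x₂) ^ β₁)]
  rw [lintegral_const_mul' _ _ ENNReal.ofReal_ne_top,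
    setLIntegral_rpow_mul_add_rpow_preimage_div_add hk hs, ← mul_assoc,
    ← ENNReal.ofReal_mul (by positivity), hconst, ENNReal.ofReal_mul hc]
  ring

lemma type2Dirichlet_measure_preimage_prod {α₁ α₂ α₃ β₁ β₂ c : ℝ} (hc : 0 ≤ c)
    {μ : Measure (ℝ × ℝ)}
    (hμ : μ = volume.withDensity fun x => ENNReal.ofReal
      ((Ioi (0 : ℝ) ×ˢ Ioi (0 : ℝ)).indicator (type2DirichletDensity α₁ α₂ α₃ β₁ β₂ c) x))
    {s t : Set ℝ} (hs : MeasurableSet s) (ht : MeasurableSet t) :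
    μ ((fun x : ℝ × ℝ => (x.1 / (1 + x.1 + x.2), x.2 / (1 + x.2))) ⁻¹' (s ×ˢ t)) =
      ENNReal.ofReal c *
        (∫⁻ y in Ioo 0 1 ∩ s, ENNReal.ofReal (y ^ (α₁ - 1) * (1 - y) ^ (α₂ + α₃ + β₁ + β₂ - 1))) *
        ∫⁻ y in Ioo 0 1 ∩ t, ENNReal.ofReal (y ^ (α₂ - 1) * (1 - y) ^ (α₃ + β₂ - 1)) := by
  have hpre : MeasurableSet
      ((fun x : ℝ × ℝ => (x.1 / (1 + x.1 + x.2), x.2 / (1 + x.2))) ⁻¹' (s ×ˢ t)) :=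
    (by fun_prop : Measurable _) (hs.prod ht)
  have hB : MeasurableSet (Ioi 0 ∩ (fun x₂ : ℝ => x₂ / (1 + x₂)) ⁻¹' t) :=
    measurableSet_Ioi.inter ((by fun_prop : Measurable _) ht)
  have hA : ∀ x₂ : ℝ, MeasurableSet (Ioi 0 ∩ (fun x₁ => x₁ / ((1 + x₂) + x₁)) ⁻¹' s) :=
    fun x₂ => measurableSet_Ioi.inter ((by fun_prop : Measurable _) hs)
  rw [hμ, ← Function.comp_def ENNReal.ofReal, ← indicator_comp_of_zero ENNReal.ofReal_zero,
    withDensity_indicator (measurableSet_Ioi.prod measurableSet_Ioi), withDensity_apply _ hpre,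
    Measure.restrict_restrict hpre, Measure.volume_eq_prod,
    setLIntegral_prod_symm_of_mem_iff (by unfold type2DirichletDensity; fun_prop) (hpre.inter
      (measurableSet_Ioi.prod measurableSet_Ioi)) hB hA ?mem]
  simp only [Function.comp_apply]
  rw [setLIntegral_congr_fun hB fun x₂ hx₂ => setLIntegral_type2DirichletDensity_fiber hc hx₂.1 hs,
    lintegral_const_mul _ (by fun_prop),
    setLIntegral_rpow_mul_add_rpow_preimage_div_add one_pos ht, one_rpow, ENNReal.ofReal_one,
    one_mul]
  case mem =>
    intro x₁ x₂
    simp only [mem_inter_iff, mem_preimage, mem_prod, mem_Ioi, add_right_comm 1 x₁ x₂]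
    tauto

/-- Scalar case (p = 1, k = 2) of Theorem 2.1: if `(X₁, X₂)` has joint density
proportional to `x₁^{α₁−1} x₂^{α₂−1} (1+x₂)^{β₁} (1+x₁+x₂)^{−(α₁+α₂+α₃+β₁+β₂)}` on
`(0,∞)²`, then `Y₁ = X₁/(1+X₁+X₂)` and `Y₂ = X₂/(1+X₂)` are independent with
`Y₁ ~ Beta(α₁, α₂+α₃+β₁+β₂)` and `Y₂ ~ Beta(α₂, α₃+β₂)`. -/
theorem type2_dirichlet_to_beta_indep {α₁ α₂ α₃ β₁ β₂ c : ℝ}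
    (h₁ : 0 < α₁) (h₂ : 0 < α₂) (h₃ : 0 < α₂ + α₃ + β₁ + β₂) (h₄ : 0 < α₃ + β₂)
    (hc : 0 < c) (μ : Measure (ℝ × ℝ))
    (hμ : μ = volume.withDensity fun x => ENNReal.ofReal
      ((Ioi (0 : ℝ) ×ˢ Ioi (0 : ℝ)).indicator
        (fun x => c * x.1 ^ (α₁ - 1) * x.2 ^ (α₂ - 1) * (1 + x.2) ^ β₁ *
          (1 + x.1 + x.2) ^ (-(α₁ + α₂ + α₃ + β₁ + β₂))) x))
    (hprob : IsProbabilityMeasure μ) :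
    Measure.map (fun x : ℝ × ℝ => (x.1 / (1 + x.1 + x.2), x.2 / (1 + x.2))) μ =
      (betaMeasure α₁ (α₂ + α₃ + β₁ + β₂)).prod (betaMeasure α₂ (α₃ + β₂)) := by
  have hB₁ := ProbabilityTheory.beta_pos h₁ h₃
  have hB₂ := ProbabilityTheory.beta_pos h₂ h₄
  have hnorm := type2Dirichlet_measure_preimage_prod hc.le hμ .univ .univ
  rw [univ_prod_univ, preimage_univ, measure_univ, inter_univ,
    setLIntegral_Ioo_rpow_mul_one_sub_rpow h₁ h₃, setLIntegral_Ioo_rpow_mul_one_sub_rpow h₂ h₄,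
    ← ENNReal.ofReal_mul hc.le, ← ENNReal.ofReal_mul (by positivity), eq_comm,
    ENNReal.ofReal_eq_one] at hnorm
  have hc_eq : c = (ProbabilityTheory.beta α₁ (α₂ + α₃ + β₁ + β₂))⁻¹ *
      (ProbabilityTheory.beta α₂ (α₃ + β₂))⁻¹ := by
    field_simp; linarith
  have := isProbabilityMeasure_betaMeasure h₁ h₃
  have := isProbabilityMeasure_betaMeasure h₂ h₄
  refine (Measure.prod_eq fun s t hs ht => ?_).symm
  rw [Measure.map_apply (by fun_prop) (hs.prod ht),
    type2Dirichlet_measure_preimage_prod hc.le hμ hs ht, betaMeasure_apply _ _ hs,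
    betaMeasure_apply _ _ ht, hc_eq,
    ENNReal.ofReal_mul (inv_nonneg.2 hB₁.le)]
  ring
end

section
/- (Scalar case p = 1, general k, of the normalizing constant (2.2).) For positive reals α₁,...,α_{k+1} and reals β₁,...,β_k such that α_{j+1}+⋯+α_{k+1}+β_j+⋯+β_k > 0 for all j, the integral over (0,∞)^k of ∏_{j=1}^k x_j^{α_j−1} · ∏_{j=1}^{k−1} (1 + x_{j+1}+⋯+x_k)^{β_j} · (1 + x₁+⋯+x_k)^{−(α₁+⋯+α_{k+1}+β₁+⋯+β_k)} dx₁⋯dx_k equals ∏_{j=1}^k Γ(α_j)Γ(α_{j+1}+⋯+α_{k+1}+β_j+⋯+β_k)/Γ(α_j+⋯+α_{k+1}+β_j+⋯+β_k). -/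
/-!
Integrate out the first variable. It occurs only in `x₁ ^ (α₁ - 1)` and in the last factor, so
with `t = 1 + x₂ + ⋯ + x_k` the inner integral is `∫₀^∞ x ^ (a - 1) (t + x) ^ (-(a + b)) dx`,
which the substitution `u = x / (t + x)` turns into `t ^ (-b) B(a, b)`. For `a = α₁` and
`b = T₁ = α₂ + ⋯ + α_{k+1} + β₁ + ⋯ + β_k`, the power `t ^ (-T₁)` cancels against `t ^ β₁`
and the last factor, leaving the integrand of the same shape for `α₂, …, α_{k+1}` and
`β₂, …, β_k`, so induction on `k` gives the product of Beta values. Working with lower Lebesgue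
integrals lets Tonelli's theorem run without integrability side conditions.
-/

open MeasureTheory Real Finset ProbabilityTheory
open scoped ENNReal

theorem lintegral_Ioo_rpow_mul_one_sub_rpow {a b : ℝ} (ha : 0 < a) (hb : 0 < b) :
    ∫⁻ x in Set.Ioo 0 1, ENNReal.ofReal (x ^ (a - 1) * (1 - x) ^ (b - 1)) =
      ENNReal.ofReal (beta a b) := by
  have hB := beta_pos ha hb
  have h := lintegral_betaPDF_eq_one ha hb
  simp only [lintegral_betaPDF, mul_assoc, ENNReal.ofReal_mul (one_div_pos.2 hB).le] at h
  rw [lintegral_const_mul' _ _ ENNReal.ofReal_ne_top] at h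
  calc _ = ENNReal.ofReal (beta a b) * (ENNReal.ofReal (1 / beta a b) *
        ∫⁻ x in Set.Ioo 0 1, ENNReal.ofReal (x ^ (a - 1) * (1 - x) ^ (b - 1))) := by
        rw [← mul_assoc, ← ENNReal.ofReal_mul hB.le, mul_one_div_cancel hB.ne', ENNReal.ofReal_one,
          one_mul]
    _ = _ := by rw [h, mul_one]

theorem hasDerivAt_div_add {t x : ℝ} (h : t + x ≠ 0) :
    HasDerivAt (fun x => x / (t + x)) (t / (t + x) ^ 2) x := by
  refine ((hasDerivAt_id x).div ((hasDerivAt_id x).const_add t) h).congr_deriv ?_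
  simp only [id]
  ring

theorem image_div_add_Ioi {t : ℝ} (ht : 0 < t) :
    (fun x => x / (t + x)) '' Set.Ioi 0 = Set.Ioo 0 1 := by
  ext u
  constructor
  · rintro ⟨x, hx : 0 < x, rfl⟩
    exact ⟨div_pos hx (by positivity), (div_lt_one (by positivity)).2 (by linarith)⟩
  · rintro ⟨hu0, hu1⟩
    have h1u : 0 < 1 - u := by linarith
    refine ⟨t * u / (1 - u), show 0 < t * u / (1 - u) by positivity, ?_⟩
    field_simp
    ring

theorem injOn_div_add_Ioi {t : ℝ} (ht : 0 < t) :
    Set.InjOn (fun x => x / (t + x)) (Set.Ioi 0) := by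
  intro x (hx : 0 < x) y (hy : 0 < y) h
  have : t + x ≠ 0 := by positivity
  have : t + y ≠ 0 := by positivity
  field_simp at h
  nlinarith

theorem abs_div_sq_mul_rpow_div_add {a b t x : ℝ} (ht : 0 < t) (hx : 0 < x) :
    |t / (t + x) ^ 2| * ((x / (t + x)) ^ (a - 1) * (1 - x / (t + x)) ^ (b - 1)) =
      t ^ b * (x ^ (a - 1) * (t + x) ^ (-(a + b))) := by
  have hs : 0 < t + x := by positivity
  have e1 : (t + x) ^ (-(a + b)) =
      ((t + x) ^ (a - 1) * (t + x) ^ (b - 1) * (t + x) ^ (2 : ℝ))⁻¹ := by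
    rw [← rpow_add hs, ← rpow_add hs, ← rpow_neg hs.le]; ring_nf
  have e2 : t ^ b = t ^ (b - 1) * t := by rw [← rpow_add_one ht.ne']; ring_nf
  have e3 : 1 - x / (t + x) = t / (t + x) := by field_simp; ring
  rw [e3, div_rpow hx.le hs.le, div_rpow ht.le hs.le, e1, e2, rpow_two,
    abs_of_pos (by positivity)]
  field_simp

theorem lintegral_Ioi_rpow_mul_add_rpow {a b t : ℝ} (ha : 0 < a) (hb : 0 < b) (ht : 0 < t) :
    ∫⁻ x in Set.Ioi 0, ENNReal.ofReal (x ^ (a - 1) * (t + x) ^ (-(a + b))) =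
      ENNReal.ofReal (t ^ (-b) * beta a b) := by
  have hsub := lintegral_image_eq_lintegral_abs_deriv_mul measurableSet_Ioi
    (fun x (hx : 0 < x) => (hasDerivAt_div_add (t := t) (by positivity)).hasDerivWithinAt)
    (injOn_div_add_Ioi ht) fun u => ENNReal.ofReal (u ^ (a - 1) * (1 - u) ^ (b - 1))
  rw [image_div_add_Ioi ht, lintegral_Ioo_rpow_mul_one_sub_rpow ha hb] at hsub
  rw [ENNReal.ofReal_mul (by positivity), hsub, ← lintegral_const_mul' _ _ ENNReal.ofReal_ne_top]
  refine setLIntegral_congr_fun measurableSet_Ioi fun x (hx : 0 < x) => ?_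
  rw [← ENNReal.ofReal_mul (abs_nonneg _), ← ENNReal.ofReal_mul (by positivity),
    abs_div_sq_mul_rpow_div_add ht hx, ← mul_assoc, ← rpow_add ht, neg_add_cancel, rpow_zero, one_mul]

theorem lintegral_pi_fin_succ_cons {α : Type*} [MeasurableSpace α] (μ : Measure α) [SigmaFinite μ]
    {n : ℕ} {f : (Fin (n + 1) → α) → ℝ≥0∞} (hf : Measurable f) :
    ∫⁻ x, f x ∂Measure.pi (fun _ => μ) =
      ∫⁻ y, ∫⁻ x₀, f (Fin.cons x₀ y) ∂μ ∂Measure.pi (fun _ => μ) := by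
  have e := (measurePreserving_piFinSuccAbove (fun _ : Fin (n + 1) => μ) 0).symm
  rw [← e.lintegral_comp hf]
  refine (lintegral_prod_symm _ (hf.comp e.measurable).aemeasurable).trans ?_
  simp [MeasurableEquiv.piFinSuccAbove_symm_apply, Fin.insertNthEquiv, Fin.insertNth_zero']

theorem setLIntegral_univ_pi_fin_succ_cons {α : Type*} [MeasurableSpace α] (μ : Measure α)
    [SigmaFinite μ] (s : Set α) {n : ℕ} {f : (Fin (n + 1) → α) → ℝ≥0∞} (hf : Measurable f) :
    ∫⁻ x in Set.univ.pi fun _ => s, f x ∂Measure.pi (fun _ => μ) =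
      ∫⁻ y in Set.univ.pi fun _ => s, ∫⁻ x₀ in s, f (Fin.cons x₀ y) ∂μ
        ∂Measure.pi (fun _ => μ) := by
  rw [Measure.restrict_pi_pi, Measure.restrict_pi_pi]
  exact lintegral_pi_fin_succ_cons _ hf

noncomputable def dirichletIntegrand {k : ℕ} (α : Fin (k + 1) → ℝ) (β : Fin k → ℝ)
    (x : Fin k → ℝ) : ℝ :=
  (∏ j, x j ^ (α j.castSucc - 1)) * (∏ j, (1 + ∑ i ∈ Ioi j, x i) ^ β j) *
    (1 + ∑ i, x i) ^ (-((∑ i, α i) + ∑ i, β i))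

noncomputable def dirichletTail {k : ℕ} (α : Fin (k + 1) → ℝ) (β : Fin k → ℝ) (j : Fin k) : ℝ :=
  ∑ i ∈ Ioi j.castSucc, α i + ∑ i ∈ Ici j, β i

theorem dirichletTail_zero {k : ℕ} (α : Fin (k + 2) → ℝ) (β : Fin (k + 1) → ℝ) :
    dirichletTail α β 0 = ∑ i, Fin.tail α i + ∑ i, β i := by
  simp [dirichletTail, Fin.tail]

theorem dirichletTail_succ {k : ℕ} (α : Fin (k + 2) → ℝ) (β : Fin (k + 1) → ℝ) (j : Fin k) :
    dirichletTail α β j.succ = dirichletTail (Fin.tail α) (Fin.tail β) j := by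
  simp [dirichletTail, Fin.sum_Ici_succ, Fin.tail]

theorem sum_Ici_castSucc_add_sum_Ici {k : ℕ} (α : Fin (k + 1) → ℝ) (β : Fin k → ℝ) (j : Fin k) :
    ∑ i ∈ Ici j.castSucc, α i + ∑ i ∈ Ici j, β i = α j.castSucc + dirichletTail α β j := by
  rw [Ici_eq_cons_Ioi, sum_cons, dirichletTail, add_assoc]

theorem measurable_dirichletIntegrand {k : ℕ} (α : Fin (k + 1) → ℝ) (β : Fin k → ℝ) :
    Measurable (dirichletIntegrand α β) := by
  unfold dirichletIntegrand
  fun_prop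

theorem dirichletIntegrand_nonneg {k : ℕ} (α : Fin (k + 1) → ℝ) (β : Fin k → ℝ) {x : Fin k → ℝ}
    (hx : ∀ i, 0 ≤ x i) : 0 ≤ dirichletIntegrand α β x := by
  have hsum (s : Finset (Fin k)) : 0 ≤ 1 + ∑ i ∈ s, x i := by
    have := sum_nonneg fun i (_ : i ∈ s) => hx i
    linarith
  unfold dirichletIntegrand
  refine mul_nonneg (mul_nonneg ?_ ?_) (rpow_nonneg (hsum univ) _)
  · exact prod_nonneg fun j _ => rpow_nonneg (hx j) _
  · exact prod_nonneg fun j _ => rpow_nonneg (hsum _) _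

theorem dirichletIntegrand_cons {k : ℕ} (α : Fin (k + 2) → ℝ) (β : Fin (k + 1) → ℝ) (x₀ : ℝ)
    {y : Fin k → ℝ} (hy : 0 < 1 + ∑ i, y i) :
    dirichletIntegrand α β (Fin.cons x₀ y) =
      (1 + ∑ i, y i) ^ dirichletTail α β 0 * dirichletIntegrand (Fin.tail α) (Fin.tail β) y *
        (x₀ ^ (α 0 - 1) * (1 + ∑ i, y i + x₀) ^ (-(α 0 + dirichletTail α β 0))) := by
  have hpow : (1 + ∑ i, y i) ^ dirichletTail α β 0 *
      (1 + ∑ i, y i) ^ (-(∑ i, Fin.tail α i + ∑ i, Fin.tail β i)) = (1 + ∑ i, y i) ^ β 0 := by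
    rw [← rpow_add hy, dirichletTail_zero, Fin.sum_univ_succ β]
    simp only [Fin.tail]
    ring_nf
  have hsum : 1 + ∑ i, (Fin.cons x₀ y : Fin (k + 1) → ℝ) i = 1 + ∑ i, y i + x₀ := by
    rw [Fin.sum_cons]; ring
  have hexp : -((∑ i, α i) + ∑ i, β i) = -(α 0 + dirichletTail α β 0) := by
    rw [Fin.sum_univ_succ α, dirichletTail_zero]; simp only [Fin.tail]; ring
  unfold dirichletIntegrand
  rw [hsum, hexp, Fin.prod_univ_succ, Fin.prod_univ_succ, Fin.sum_Ioi_zero]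
  simp only [Fin.cons_zero, Fin.cons_succ, Fin.castSucc_zero, Fin.sum_Ioi_succ]
  rw [← hpow]
  simp only [Fin.tail, Fin.succ_castSucc]
  ring

theorem setLIntegral_Ioi_dirichletIntegrand_cons {k : ℕ} (α : Fin (k + 2) → ℝ)
    (β : Fin (k + 1) → ℝ) (hα : 0 < α 0) (htail : 0 < dirichletTail α β 0) {y : Fin k → ℝ}
    (hy : ∀ i, 0 ≤ y i) :
    ∫⁻ x₀ in Set.Ioi 0, ENNReal.ofReal (dirichletIntegrand α β (Fin.cons x₀ y)) =
      ENNReal.ofReal (beta (α 0) (dirichletTail α β 0)) *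
        ENNReal.ofReal (dirichletIntegrand (Fin.tail α) (Fin.tail β) y) := by
  have ht : 0 < 1 + ∑ i, y i := by linarith [sum_nonneg fun i (_ : i ∈ univ) => hy i]
  have hF := dirichletIntegrand_nonneg (Fin.tail α) (Fin.tail β) hy
  have hB := beta_pos hα htail
  set t := 1 + ∑ i, y i
  set T := dirichletTail α β 0
  set F := dirichletIntegrand (Fin.tail α) (Fin.tail β) y
  have hC : 0 ≤ t ^ T * F := mul_nonneg (rpow_nonneg ht.le _) hF
  calc _ = ∫⁻ x₀ in Set.Ioi 0, ENNReal.ofReal (t ^ T * F) *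
        ENNReal.ofReal (x₀ ^ (α 0 - 1) * (t + x₀) ^ (-(α 0 + T))) :=
      lintegral_congr fun x₀ => by rw [dirichletIntegrand_cons α β x₀ ht, ENNReal.ofReal_mul hC]
    _ = ENNReal.ofReal (t ^ T * F) * ENNReal.ofReal (t ^ (-T) * beta (α 0) T) := by
      rw [lintegral_const_mul' _ _ ENNReal.ofReal_ne_top,
        lintegral_Ioi_rpow_mul_add_rpow hα htail ht]
    _ = ENNReal.ofReal (beta (α 0) T) * ENNReal.ofReal F := by
      rw [← ENNReal.ofReal_mul hC, ← ENNReal.ofReal_mul hB.le, rpow_neg ht.le]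
      congr 1
      field_simp

theorem lintegral_dirichletIntegrand {k : ℕ} (α : Fin (k + 1) → ℝ) (β : Fin k → ℝ)
    (hα : ∀ j, 0 < α j) (htail : ∀ j, 0 < dirichletTail α β j) :
    ∫⁻ x in Set.univ.pi fun _ => Set.Ioi 0, ENNReal.ofReal (dirichletIntegrand α β x) =
      ENNReal.ofReal (∏ j, beta (α j.castSucc) (dirichletTail α β j)) := by
  induction k with
  | zero => simp [dirichletIntegrand, volume_pi, Measure.pi_pi]
  | succ k ih =>
    have inner : ∀ y ∈ Set.univ.pi fun _ => Set.Ioi (0 : ℝ),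
        ∫⁻ x₀ in Set.Ioi 0, ENNReal.ofReal (dirichletIntegrand α β (Fin.cons x₀ y)) =
          ENNReal.ofReal (beta (α 0) (dirichletTail α β 0)) *
            ENNReal.ofReal (dirichletIntegrand (Fin.tail α) (Fin.tail β) y) := fun y hy =>
      setLIntegral_Ioi_dirichletIntegrand_cons α β (hα 0) (htail 0) fun i =>
        (hy i (Set.mem_univ i)).le
    rw [volume_pi, setLIntegral_univ_pi_fin_succ_cons _ _
        (measurable_dirichletIntegrand α β).ennreal_ofReal, ← volume_pi,
      setLIntegral_congr_fun (MeasurableSet.univ_pi fun _ => measurableSet_Ioi) inner,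
      lintegral_const_mul' _ _ ENNReal.ofReal_ne_top,
      ih (Fin.tail α) (Fin.tail β) (fun j => hα _) fun j => dirichletTail_succ α β j ▸ htail j.succ,
      ← ENNReal.ofReal_mul (beta_pos (hα 0) (htail 0)).le, Fin.prod_univ_succ]
    simp only [Fin.castSucc_zero, dirichletTail_succ, Fin.tail, Fin.succ_castSucc]

/-- Scalar (p = 1) case of the normalizing constant (2.2) for general `k`:
the extended type-2 Dirichlet integral over the positive orthant of `ℝ^k`. -/
theorem dirichlet_type2_integral_general {k : ℕ} (α : Fin (k + 1) → ℝ) (β : Fin k → ℝ)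
    (hα : ∀ j, 0 < α j)
    (htail : ∀ j : Fin k,
      0 < (∑ i ∈ univ.filter fun i : Fin (k + 1) => j.castSucc < i, α i) +
          ∑ i ∈ univ.filter fun i : Fin k => j ≤ i, β i) :
    ∫ x in Set.univ.pi fun _ : Fin k => Set.Ioi (0 : ℝ),
        (∏ j, x j ^ (α j.castSucc - 1)) *
          (∏ j, (1 + ∑ i ∈ univ.filter fun i : Fin k => j < i, x i) ^ β j) *
          (1 + ∑ i, x i) ^ (-((∑ i, α i) + ∑ i, β i)) =
      ∏ j : Fin k,
        Gamma (α j.castSucc) *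
            Gamma ((∑ i ∈ univ.filter fun i : Fin (k + 1) => j.castSucc < i, α i) +
              ∑ i ∈ univ.filter fun i : Fin k => j ≤ i, β i) /
          Gamma ((∑ i ∈ univ.filter fun i : Fin (k + 1) => j.castSucc ≤ i, α i) +
            ∑ i ∈ univ.filter fun i : Fin k => j ≤ i, β i) := by
  simp only [filter_lt_eq_Ioi, filter_le_eq_Ici, sum_Ici_castSucc_add_sum_Ici] at htail ⊢
  change ∀ j, 0 < dirichletTail α β j at htail
  change ∫ x in _, dirichletIntegrand α β x = ∏ j, beta _ (dirichletTail α β j)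
  have hS : MeasurableSet (Set.univ.pi fun _ : Fin k => Set.Ioi (0 : ℝ)) :=
    MeasurableSet.univ_pi fun _ => measurableSet_Ioi
  have hnonneg : 0 ≤ᵐ[volume.restrict (Set.univ.pi fun _ => Set.Ioi 0)] dirichletIntegrand α β :=
    (ae_restrict_iff' hS).2 <| .of_forall fun x hx =>
      dirichletIntegrand_nonneg α β fun i => (hx i (Set.mem_univ i)).le
  rw [integral_eq_lintegral_of_nonneg_ae hnonneg
      (measurable_dirichletIntegrand α β).aestronglyMeasurable,
    lintegral_dirichletIntegrand α β hα htail, ENNReal.toReal_ofReal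
      (prod_nonneg fun j _ => (beta_pos (hα _) (htail j)).le)]
end

section
/- (Marginal consistency, scalar p = 1, k = 2.) If (X₁, X₂) has joint density c · x₁^{α₁−1} x₂^{α₂−1} (1+x₂)^{β₁} (1+x₁+x₂)^{−(α₁+α₂+α₃+β₁+β₂)} on (0,∞)², then the marginal density of X₂ is that of a type-2 beta distribution with parameters (α₂, α₃+β₂) up to the stated normalization: the marginal of X₂ is proportional to x₂^{α₂−1}(1+x₂)^{−(α₂+α₃+β₂)}. -/
open MeasureTheory Real Set

lemma my_integrableOn_shifted {a p : ℝ} (s : ℝ) (ha : 0 < a) (hap : a < p) (hs : 0 < s) :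
    IntegrableOn (fun x : ℝ => x ^ (a - 1) * (s + x) ^ (-p)) (Ioi 0) := by
  have hp : 0 < p := ha.trans hap
  have hmeas : Measurable fun x : ℝ => x ^ (a - 1) * (s + x) ^ (-p) := by fun_prop
  have h1 : IntegrableOn (fun x : ℝ => x ^ (a - 1) * (s + x) ^ (-p)) (Ioc 0 1) := by
    have hg : IntegrableOn (fun x : ℝ => s ^ (-p) * x ^ (a - 1)) (Ioc (0:ℝ) 1) := by
      have h := intervalIntegral.intervalIntegrable_rpow' (a := (0:ℝ)) (b := 1)
        (show (-1:ℝ) < a - 1 by linarith)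
      rw [intervalIntegrable_iff_integrableOn_Ioc_of_le zero_le_one] at h
      exact h.const_mul _
    refine hg.mono' hmeas.aestronglyMeasurable ?_
    filter_upwards [ae_restrict_mem measurableSet_Ioc] with x hx
    have hx0 : 0 < x := hx.1
    rw [Real.norm_eq_abs, abs_of_nonneg (by positivity)]
    rw [mul_comm (s ^ (-p))]
    exact mul_le_mul_of_nonneg_left
      (Real.rpow_le_rpow_of_nonpos hs (by linarith) (by linarith))
      (by positivity)
  have h2 : IntegrableOn (fun x : ℝ => x ^ (a - 1) * (s + x) ^ (-p)) (Ioi 1) := by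
    have hg : IntegrableOn (fun x : ℝ => x ^ (a - 1 - p)) (Ioi (1:ℝ)) :=
      integrableOn_Ioi_rpow_of_lt (by linarith) zero_lt_one
    refine hg.mono' hmeas.aestronglyMeasurable ?_
    filter_upwards [ae_restrict_mem measurableSet_Ioi] with x hx
    have hx0 : (0:ℝ) < x := lt_trans zero_lt_one hx
    rw [Real.norm_eq_abs, abs_of_nonneg (by positivity)]
    calc x ^ (a-1) * (s+x) ^ (-p) ≤ x ^ (a-1) * x ^ (-p) :=
          mul_le_mul_of_nonneg_left
            (Real.rpow_le_rpow_of_nonpos hx0 (by linarith) (by linarith))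
            (by positivity)
      _ = x ^ (a - 1 - p) := by rw [← Real.rpow_add hx0]; ring_nf
  have h := h1.union h2
  rwa [Ioc_union_Ioi_eq_Ioi zero_le_one] at h

lemma my_integral_base_pos {a p : ℝ} (ha : 0 < a) (hap : a < p) :
    0 < ∫ x in Ioi (0:ℝ), x ^ (a - 1) * (1 + x) ^ (-p) := by
  rw [setIntegral_pos_iff_support_of_nonneg_ae ?_ (my_integrableOn_shifted 1 ha hap one_pos)]
  · refine lt_of_lt_of_le ?_ (measure_mono (subset_inter ?_ subset_rfl))
    · rw [Real.volume_Ioi]; exact ENNReal.zero_lt_top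
    · intro x hx
      have hx0 : (0:ℝ) < x := hx
      have : 0 < x ^ (a-1) * (1+x) ^ (-p) :=
        mul_pos (Real.rpow_pos_of_pos hx0 _) (Real.rpow_pos_of_pos (by linarith) _)
      exact fun h => this.ne' h
  · filter_upwards [ae_restrict_mem measurableSet_Ioi] with x hx
    have hx0 : (0:ℝ) < x := hx
    positivity
lemma my_integral_shifted {a p : ℝ} {s : ℝ} (hs : 0 < s) :
    ∫ x in Ioi (0:ℝ), x ^ (a - 1) * (s + x) ^ (-p)
      = s ^ (a - p) * ∫ x in Ioi (0:ℝ), x ^ (a - 1) * (1 + x) ^ (-p) := by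
  have key := integral_comp_mul_left_Ioi (fun x : ℝ => x ^ (a-1) * (s + x) ^ (-p)) 0 hs
  rw [mul_zero] at key
  have congr1 : (∫ x in Ioi (0:ℝ), (fun x : ℝ => x ^ (a-1) * (s + x) ^ (-p)) (s * x))
      = ∫ x in Ioi (0:ℝ), s ^ (a-1-p) * (x ^ (a-1) * (1+x) ^ (-p)) := by
    refine setIntegral_congr_fun measurableSet_Ioi fun x hx => ?_
    have hx0 : (0:ℝ) < x := hx
    simp only
    rw [show s + s * x = s * (1 + x) by ring, Real.mul_rpow hs.le hx0.le,
      Real.mul_rpow hs.le (by linarith), show a - 1 - p = (a-1) + (-p) by ring,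
      Real.rpow_add hs]
    ring
  rw [congr1, integral_const_mul, smul_eq_mul] at key
  have hJ : (∫ x in Ioi (0:ℝ), x ^ (a-1) * (s + x) ^ (-p))
      = s * (s ^ (a-1-p) * ∫ x in Ioi (0:ℝ), x ^ (a-1) * (1+x) ^ (-p)) := by
    rw [key, ← mul_assoc, mul_inv_cancel₀ hs.ne', one_mul]
  rw [hJ, ← mul_assoc]
  congr 1
  rw [show s * s ^ (a-1-p) = s ^ (1:ℝ) * s ^ (a-1-p) by rw [Real.rpow_one],
    ← Real.rpow_add hs]
  ring_nf

lemma my_map_snd_withDensity (f : ℝ × ℝ → ENNReal) (hf : Measurable f) :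
    Measure.map Prod.snd (volume.withDensity f)
      = volume.withDensity fun y => ∫⁻ x, f (x, y) := by
  ext s hs
  rw [Measure.map_apply measurable_snd hs,
    withDensity_apply _ (hs.preimage measurable_snd), withDensity_apply _ hs,
    ← lintegral_indicator (hs.preimage measurable_snd) _,
    ← lintegral_indicator hs _]
  rw [Measure.volume_eq_prod, lintegral_prod_symm' _ (hf.indicator (hs.preimage measurable_snd))]
  congr 1
  funext y
  by_cases hy : y ∈ s
  · rw [indicator_of_mem hy]
    congr 1
    funext x
    rw [indicator_of_mem (by simpa using hy)]
  · rw [indicator_of_notMem hy]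
    have h0 : ∀ x : ℝ, (Prod.snd ⁻¹' s).indicator f (x, y) = 0 :=
      fun x => indicator_of_notMem (by simpa using hy) _
    simp only [h0, lintegral_zero]
/-- Marginal consistency (scalar p = 1, k = 2): if `(X₁, X₂)` has the extended type-2
Dirichlet joint density, then the marginal of `X₂` is proportional to
`x₂^{α₂−1}(1+x₂)^{−(α₂+α₃+β₂)}`, i.e. `X₂` is type-2 beta with parameters `(α₂, α₃+β₂)`. -/
theorem marginal_X2_type2_beta {α₁ α₂ α₃ β₁ β₂ c : ℝ}
    (h₁ : 0 < α₁) (h₂ : 0 < α₂) (h₃ : 0 < α₂ + α₃ + β₁ + β₂) (h₄ : 0 < α₃ + β₂)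
    (hc : 0 < c) (μ : Measure (ℝ × ℝ))
    (hμ : μ = volume.withDensity fun x => ENNReal.ofReal
      ((Ioi (0 : ℝ) ×ˢ Ioi (0 : ℝ)).indicator
        (fun x => c * x.1 ^ (α₁ - 1) * x.2 ^ (α₂ - 1) * (1 + x.2) ^ β₁ *
          (1 + x.1 + x.2) ^ (-(α₁ + α₂ + α₃ + β₁ + β₂))) x))
    (hprob : IsProbabilityMeasure μ) :
    ∃ c' : ℝ, 0 < c' ∧
      Measure.map Prod.snd μ = volume.withDensity fun x₂ => ENNReal.ofReal
        ((Ioi (0 : ℝ)).indicator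
          (fun x₂ => c' * x₂ ^ (α₂ - 1) * (1 + x₂) ^ (-(α₂ + α₃ + β₂))) x₂) := by
  set p : ℝ := α₁ + α₂ + α₃ + β₁ + β₂ with hp_def
  have hap : α₁ < p := by simp only [hp_def]; linarith
  set I : ℝ := ∫ x in Ioi (0:ℝ), x ^ (α₁ - 1) * (1 + x) ^ (-p) with hI_def
  have hIpos : 0 < I := my_integral_base_pos h₁ hap
  refine ⟨c * I, by positivity, ?_⟩
  subst hμ
  set F : ℝ × ℝ → ℝ := fun x => c * x.1 ^ (α₁ - 1) * x.2 ^ (α₂ - 1) * (1 + x.2) ^ β₁ *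
      (1 + x.1 + x.2) ^ (-p) with hF_def
  have hFmeas : Measurable F := by fun_prop
  have hfmeas : Measurable fun x : ℝ × ℝ =>
      ENNReal.ofReal ((Ioi (0:ℝ) ×ˢ Ioi (0:ℝ)).indicator F x) :=
    (hFmeas.indicator (measurableSet_Ioi.prod measurableSet_Ioi)).ennreal_ofReal
  rw [my_map_snd_withDensity _ hfmeas]
  congr 1
  funext y
  by_cases hy : y ∈ Ioi (0:ℝ)
  · have hy0 : (0:ℝ) < y := hy
    have hs : (0:ℝ) < 1 + y := by linarith
    have hin : ∀ x : ℝ,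
        ENNReal.ofReal ((Ioi (0:ℝ) ×ˢ Ioi (0:ℝ)).indicator F (x, y))
          = (Ioi (0:ℝ)).indicator (fun x => ENNReal.ofReal (F (x, y))) x := by
      intro x
      by_cases hx : x ∈ Ioi (0:ℝ)
      · rw [indicator_of_mem (mk_mem_prod hx hy), indicator_of_mem hx]
      · rw [indicator_of_notMem (fun h => hx h.1), indicator_of_notMem hx,
          ENNReal.ofReal_zero]
    simp only [hin]
    rw [lintegral_indicator measurableSet_Ioi]
    have hfun : (fun x : ℝ => F (x, y))
        = fun x : ℝ => (c * y ^ (α₂ - 1) * (1 + y) ^ β₁) *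
            (x ^ (α₁ - 1) * ((1 + y) + x) ^ (-p)) := by
      funext x
      simp only [hF_def]
      rw [show (1:ℝ) + x + y = (1 + y) + x by ring]
      ring
    have hint : Integrable (fun x : ℝ => F (x, y)) (volume.restrict (Ioi 0)) := by
      rw [hfun]
      exact (my_integrableOn_shifted (1 + y) h₁ hap hs).const_mul _
    have hnn : 0 ≤ᵐ[volume.restrict (Ioi (0:ℝ))] fun x => F (x, y) := by
      filter_upwards [ae_restrict_mem measurableSet_Ioi] with x hx
      have hx0 : (0:ℝ) < x := hx
      simp only [hF_def]
      have : (0:ℝ) < c * x ^ (α₁ - 1) * y ^ (α₂ - 1) * (1 + y) ^ β₁ *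
          (1 + x + y) ^ (-p) :=
        mul_pos (mul_pos (mul_pos (mul_pos hc (Real.rpow_pos_of_pos hx0 _))
          (Real.rpow_pos_of_pos hy0 _)) (Real.rpow_pos_of_pos hs _))
          (Real.rpow_pos_of_pos (by linarith) _)
      exact this.le
    rw [← MeasureTheory.ofReal_integral_eq_lintegral_ofReal hint hnn]
    rw [indicator_of_mem hy]
    congr 1
    rw [hfun, MeasureTheory.integral_const_mul, my_integral_shifted hs, ← hI_def]
    have hpow : (1 + y) ^ β₁ * (1 + y) ^ (α₁ - p) = (1 + y) ^ (-(α₂ + α₃ + β₂)) := by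
      rw [← Real.rpow_add hs]
      congr 1
      simp only [hp_def]; ring
    calc c * y ^ (α₂ - 1) * (1 + y) ^ β₁ * ((1 + y) ^ (α₁ - p) * I)
        = (c * I * y ^ (α₂ - 1)) * ((1 + y) ^ β₁ * (1 + y) ^ (α₁ - p)) := by ring
      _ = c * I * y ^ (α₂ - 1) * (1 + y) ^ (-(α₂ + α₃ + β₂)) := by rw [hpow]
  · have h0 : ∀ x : ℝ,
        ENNReal.ofReal ((Ioi (0:ℝ) ×ˢ Ioi (0:ℝ)).indicator F (x, y)) = 0 := by
      intro x
      rw [indicator_of_notMem (fun h => hy h.2), ENNReal.ofReal_zero]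
    simp only [h0, lintegral_zero, indicator_of_notMem hy, ENNReal.ofReal_zero]
end
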